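/- For every n ≥ 3, there exists f ∈ G_n with A(f) = 0 such that f cannot be written as a product of at most 3 involutions of G_n. -/
import Mathlib

abbrev Circle1 : Type := AddCircle (1 : ℝ)

abbrev Gn (n : ℕ) : Type := (Fin n → Circle1) × Equiv.Perm (Fin n)

namespace Gn
variable {n : ℕ}

noncomputable instance : Mul (Gn n) := ⟨fun f g => ⟨fun j => g.1 j + f.1 (g.2 j), f.2 * g.2⟩⟩
noncomputable instance : One (Gn n) := ⟨⟨fun _ => 0, 1⟩⟩
noncomputable instance : Inv (Gn n) := ⟨fun f => ⟨fun j => -f.1 (f.2⁻¹ j), f.2⁻¹⟩⟩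

noncomputable instance : Group (Gn n) where
  mul_assoc f g h := Prod.ext (funext fun j => (add_assoc _ _ _).symm) rfl
  one_mul f := Prod.ext (funext fun j => add_zero _) (one_mul _)
  mul_one f := Prod.ext (funext fun j => zero_add _) (mul_one _)
  inv_mul_cancel f := Prod.ext
    (funext fun j => show f.1 j + -f.1 (f.2⁻¹ (f.2 j)) = 0 by simp)
    (inv_mul_cancel _)

@[simp] lemma mul_fst (f g : Gn n) (j : Fin n) : (f * g).1 j = g.1 j + f.1 (g.2 j) := rfl
@[simp] lemma mul_snd (f g : Gn n) : (f * g).2 = f.2 * g.2 := rfl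
@[simp] lemma one_fst (j : Fin n) : (1 : Gn n).1 j = 0 := rfl
@[simp] lemma one_snd : (1 : Gn n).2 = 1 := rfl
@[simp] lemma inv_fst (f : Gn n) (j : Fin n) : (f⁻¹).1 j = -f.1 (f.2⁻¹ j) := rfl
@[simp] lemma inv_snd (f : Gn n) : (f⁻¹).2 = f.2⁻¹ := rfl


/-- The map `A : G_n → 𝕋`, `A(α, σ) = 2(α_1 + ⋯ + α_n)` (it is a group homomorphism). -/
noncomputable def Afun (f : Gn n) : Circle1 := 2 • ∑ j, f.1 j

end Gn

noncomputable def rf (n : ℕ) : Fin n → ℝ := fun j =>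
  if (j : ℕ) = 0 then 1/5 else if (j : ℕ) = 1 then 1/5 else if (j : ℕ) = 2 then 1/10 else 0

lemma coe_add' (x y : ℝ) : ((x + y : ℝ) : Circle1) = ((x:ℝ) : Circle1) + ((y:ℝ) : Circle1) := rfl

lemma rf_bounds (n : ℕ) (j : Fin n) : 0 ≤ rf n j ∧ rf n j ≤ 1/5 := by
  unfold rf; split_ifs <;> norm_num

lemma rf_sum {n : ℕ} (hn : 3 ≤ n) : ∑ j : Fin n, rf n j = 1/2 := by
  have h0 : 0 < n := by omega
  have h1 : 1 < n := by omega
  have h2 : 2 < n := by omega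
  have hsub : ({⟨0,h0⟩, ⟨1,h1⟩, ⟨2,h2⟩} : Finset (Fin n)) ⊆ Finset.univ := Finset.subset_univ _
  rw [← Finset.sum_subset hsub (fun x _ hx => by
    simp only [Finset.mem_insert, Finset.mem_singleton, Fin.ext_iff] at hx
    push_neg at hx
    simp [rf, hx.1, hx.2.1, hx.2.2])]
  rw [Finset.sum_insert (by simp [Fin.ext_iff]), Finset.sum_insert (by simp [Fin.ext_iff]),
    Finset.sum_singleton]
  simp [rf]
  norm_num

/-- For every `n ≥ 3` there exists `f ∈ G_n` with `A(f) = 0` that is not a product of at most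
`3` involutions of `G_n`. -/
theorem stmt12 {n : ℕ} (hn : 3 ≤ n) :
    ∃ f : Gn n, Gn.Afun f = 0 ∧
      ¬ ∃ l : List (Gn n), l.length ≤ 3 ∧ (∀ T ∈ l, T * T = 1) ∧ l.prod = f := by
  have h0 : 0 < n := by omega
  refine ⟨(fun j => ((rf n j : ℝ) : Circle1), 1), ?_, ?_⟩
  · -- Afun f = 0
    show (2 • ∑ j : Fin n, ((rf n j : ℝ) : Circle1)) = 0
    have hmap : ∑ j : Fin n, ((rf n j : ℝ) : Circle1)
        = ((∑ j : Fin n, rf n j : ℝ) : Circle1) :=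
      (map_sum (QuotientAddGroup.mk' (AddSubgroup.zmultiples (1:ℝ))) _ _).symm
    have h11 : ((1:ℝ)/2 + 1/2) = (1:ℝ) := by norm_num
    rw [hmap, rf_sum hn, two_nsmul, ← coe_add', h11]
    exact AddCircle.coe_period 1
  · rintro ⟨l, hlen, hinv, hprod⟩
    -- pad the list to length 3
    set L : List (Gn n) := l ++ List.replicate (3 - l.length) 1 with hL
    have hLlen : L.length = 3 := by simp [hL]; omega
    have hLinv : ∀ T ∈ L, T * T = 1 := by
      intro T hT
      rcases List.mem_append.1 hT with h | h
      · exact hinv T h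
      · rw [List.eq_of_mem_replicate h]; exact one_mul 1
    have hLprod : L.prod = (fun j => ((rf n j : ℝ) : Circle1), 1) := by
      rw [hL, List.prod_append, List.prod_replicate, one_pow, mul_one, hprod]
    obtain ⟨T1, T2, T3, hT⟩ := List.length_eq_three.1 hLlen
    rw [hT] at hLprod hLinv
    have hI1 := hLinv T1 (by simp)
    have hI2 := hLinv T2 (by simp)
    have hI3 := hLinv T3 (by simp)
    have hprod3 : T1 * T2 * T3 = (fun j => ((rf n j : ℝ) : Circle1), 1) := by
      simpa [mul_assoc] using hLprod
    -- permutation parts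
    set τ1 := T1.2; set τ2 := T2.2; set τ3 := T3.2
    have s1 : τ1 * τ1 = 1 := congrArg Prod.snd hI1
    have s2 : τ2 * τ2 = 1 := congrArg Prod.snd hI2
    have s3 : τ3 * τ3 = 1 := congrArg Prod.snd hI3
    have hperm : τ1 * τ2 * τ3 = 1 := congrArg Prod.snd hprod3
    have i1 : τ1⁻¹ = τ1 := inv_eq_of_mul_eq_one_left s1
    have i2 : τ2⁻¹ = τ2 := inv_eq_of_mul_eq_one_left s2
    have i3 : τ3⁻¹ = τ3 := inv_eq_of_mul_eq_one_left s3
    have h12 : τ1 * τ2 = τ3 := by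
      rw [eq_inv_of_mul_eq_one_left hperm, i3]
    have h21 : τ2 * τ1 = τ3 := by
      rw [← i2, ← i1, ← mul_inv_rev, h12, i3]
    have h23 : τ2 * τ3 = τ1 := by rw [← h21, ← mul_assoc, s2, one_mul]
    have h31 : τ3 * τ1 = τ2 := by rw [← h21, mul_assoc, s1, mul_one]
    have h32 : τ3 * τ2 = τ1 := by rw [← h12, mul_assoc, s2, mul_one]
    have h13 : τ1 * τ3 = τ2 := by rw [← h12, ← mul_assoc, s1, one_mul]
    -- torus parts
    set a := T1.1; set b := T2.1; set c := T3.1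
    have ha : ∀ j, a j + a (τ1 j) = 0 := fun j => congrFun (congrArg Prod.fst hI1) j
    have hb : ∀ j, b j + b (τ2 j) = 0 := fun j => congrFun (congrArg Prod.fst hI2) j
    have hc : ∀ j, c j + c (τ3 j) = 0 := fun j => congrFun (congrArg Prod.fst hI3) j
    have hE : ∀ j, ((rf n j : ℝ) : Circle1) = c j + (b (τ3 j) + a (τ1 j)) := by
      intro j
      have := congrFun (congrArg Prod.fst hprod3) j
      have h23j : τ2 (τ3 j) = τ1 j := by rw [← Equiv.Perm.mul_apply, h23]
      calc ((rf n j : ℝ) : Circle1) = ((T1*T2*T3).1) j := this.symm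
        _ = c j + (b (τ3 j) + a (τ2 (τ3 j))) := rfl
        _ = c j + (b (τ3 j) + a (τ1 j)) := by rw [h23j]
    -- the four points
    set x0 : Fin n := ⟨0, h0⟩
    set p := τ1 x0
    set q := τ2 x0
    set r := τ3 x0
    have E3p : τ3 p = q := by show τ3 (τ1 x0) = τ2 x0; rw [← Equiv.Perm.mul_apply, h31]
    have E1p : τ1 p = x0 := by show τ1 (τ1 x0) = x0; rw [← Equiv.Perm.mul_apply, s1]; rfl
    have E3q : τ3 q = p := by show τ3 (τ2 x0) = τ1 x0; rw [← Equiv.Perm.mul_apply, h32]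
    have E1q : τ1 q = r := by show τ1 (τ2 x0) = τ3 x0; rw [← Equiv.Perm.mul_apply, h12]
    have E3r : τ3 r = x0 := by show τ3 (τ3 x0) = x0; rw [← Equiv.Perm.mul_apply, s3]; rfl
    have E1r : τ1 r = q := by show τ1 (τ3 x0) = τ2 x0; rw [← Equiv.Perm.mul_apply, h13]
    have E2p : τ2 p = r := by show τ2 (τ1 x0) = τ3 x0; rw [← Equiv.Perm.mul_apply, h21]
    -- pair identities at chosen points
    have A1 : a x0 + a p = 0 := ha x0
    have A2 : a q + a r = 0 := by have := ha q; rwa [E1q] at this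
    have B1 : b x0 + b q = 0 := hb x0
    have B2 : b p + b r = 0 := by have := hb p; rwa [E2p] at this
    have C1 : c x0 + c r = 0 := hc x0
    have C2 : c p + c q = 0 := by have := hc p; rwa [E3p] at this
    -- key identity
    have key : ((rf n x0 : ℝ) : Circle1) + ((rf n p : ℝ) : Circle1)
        + ((rf n q : ℝ) : Circle1) + ((rf n r : ℝ) : Circle1) = 0 := by
      have e0 := hE x0
      have e1 := hE p; rw [E3p, E1p] at e1
      have e2 := hE q; rw [E3q, E1q] at e2
      have e3 := hE r; rw [E3r, E1r] at e3
      rw [e0, e1, e2, e3]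
      have : (c x0 + (b r + a p)) + (c p + (b q + a x0)) + (c q + (b p + a r))
          + (c r + (b x0 + a q))
          = (a x0 + a p) + (a q + a r) + (b x0 + b q) + (b p + b r)
            + (c x0 + c r) + (c p + c q) := by abel
      rw [this, A1, A2, B1, B2, C1, C2]
      simp
    -- contradiction: the real sum lies strictly between 0 and 1
    rw [← coe_add', ← coe_add', ← coe_add'] at key
    obtain ⟨k, hk⟩ := (AddCircle.coe_eq_zero_iff 1).1 key
    rw [zsmul_eq_mul, mul_one] at hk
    have hlow : (1:ℝ)/5 ≤ rf n x0 + rf n p + rf n q + rf n r := by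
      have hx0 : rf n x0 = 1/5 := by simp [rf, x0]
      have := rf_bounds n p; have := rf_bounds n q; have := rf_bounds n r
      linarith [(rf_bounds n p).1, (rf_bounds n q).1, (rf_bounds n r).1, hx0.ge]
    have hhigh : rf n x0 + rf n p + rf n q + rf n r ≤ 4/5 := by
      linarith [(rf_bounds n x0).2, (rf_bounds n p).2, (rf_bounds n q).2, (rf_bounds n r).2]
    have hk1 : (0:ℝ) < k := by rw [hk]; linarith
    have hk2 : (k:ℝ) < 1 := by rw [hk]; linarith
    have : (0:ℤ) < k := by exact_mod_cast hk1
    have : k < 1 := by exact_mod_cast hk2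
    omega
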